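/- arXiv:1207.2408 — 4 statements merged into one kernel-verified Lean document; each statement's English description precedes it below -/
import Mathlib

section
/- Let N ≥ 2, let Ω be a convex bounded domain in ℝ^d, and let u_1,…,u_{N−1} be bounded vector fields from Ω to ℝ^d whose (N−1)-tuple (u_1,…,u_{N−1}) is jointly N-monotone. Then there exists a function H : Ω^N → ℝ such that: (i) H is N-sub-antisymmetric; (ii) H(x,x,…,x) = 0 for every x ∈ Ω; (iii) for each fixed (x_2,…,x_N) ∈ Ω^{N−1}, the map x_1 ↦ H(x_1,x_2,…,x_N) is concave on Ω; (iv) for each fixed x_1 ∈ Ω, the map (x_2,…,x_N) ↦ H(x_1,x_2,…,x_N) is jointly convex on Ω^{N−1}; and (v) for every x ∈ Ω and every (y_1,…,y_{N−1}) ∈ Ω^{N−1}, H(x,y_1,…,y_{N−1}) ≥ ∑_{ℓ=1}^{N−1} ⟨u_ℓ(x), y_ℓ − x⟩, i.e. (u_1(x),…,u_{N−1}(x)) is a subgradient at (x,…,x) of the convex function (y_1,…,y_{N−1}) ↦ H(x,y_1,…,y_{N−1}). -/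
open MeasureTheory Finset
open scoped BigOperators RealInnerProductSpace

noncomputable section

/-- `ℝ^d` as a Euclidean space. -/
abbrev Ed (d : ℕ) := EuclideanSpace ℝ (Fin d)

/-- The cyclic permutation `σ(x₁,…,x_N) = (x₂,…,x_N,x₁)` acting on tuples. -/
def cyc {N : ℕ} {α : Type*} (x : Fin N → α) : Fin N → α := x ∘ finRotate N

/-- The `(N-1)`-tuple `(u 1, …, u (N-1))` is jointly `N`-monotone on `Ω`:
for every cycle `x 1, …, x (2N-1)` of points of `Ω` with `x (N+i) = x i` for
`1 ≤ i ≤ N-1`, one has `∑_{i=1}^{N} ∑_{ℓ=1}^{N-1} ⟨u ℓ (x i), x i - x (i+ℓ)⟩ ≥ 0`. -/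
def JointlyNMonotone (N : ℕ) {d : ℕ} (Ω : Set (Ed d)) (u : ℕ → Ed d → Ed d) : Prop :=
  ∀ x : ℕ → Ed d,
    (∀ i, 1 ≤ i → i ≤ 2 * N - 1 → x i ∈ Ω) →
    (∀ i, 1 ≤ i → i ≤ N - 1 → x (N + i) = x i) →
    0 ≤ ∑ i ∈ Icc 1 N, ∑ ℓ ∈ Icc 1 (N - 1), ⟪u ℓ (x i), x i - x (i + ℓ)⟫

/-- `H` is `N`-sub-antisymmetric on `Ω^N` : `∑_{i=0}^{N-1} H(σ^i x) ≤ 0` on `Ω^N`. -/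
def NSubAntisymmetric (N : ℕ) {d : ℕ} (Ω : Set (Ed d)) (H : (Fin N → Ed d) → ℝ) : Prop :=
  ∀ x : Fin N → Ed d, (∀ i, x i ∈ Ω) → ∑ i ∈ range N, H (cyc^[i] x) ≤ 0

/-!
`H(x₁, …, x_N)` is the concave envelope in `x₁`, over `Ω`, of the linear cost
`c(x₁; x₂, …, x_N) = ∑_ℓ ⟨u_ℓ(x₁), x_{ℓ+1} - x₁⟩`, i.e. the supremum of `∑_j λ_j c(z_j; x₂, …, x_N)`
over finite convex decompositions `x₁ = ∑_j λ_j z_j` in `Ω`. It is concave in `x₁` by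
construction, convex in the remaining variables as a supremum of affine functions, and it
dominates `c`, which is (v).

For (i), decompose every `x_v`, draw the points of a cycle independently from these
decompositions and average the joint `N`-monotonicity inequality over the random cycles. By
independence a cross term `⟨u_ℓ(z_v), z_{v+ℓ}⟩` averages to `⟨u_ℓ(z_v), x_{v+ℓ}⟩`, so the average is
`-∑_v ∑_j λ_{v,j} c(z_{v,j}; σ^v x)`; taking suprema gives `∑_v H(σ^v x) ≤ 0`. Finally (ii)
follows from (i) at diagonal points, which `σ` fixes, together with `H ≥ c = 0` there.
-/

section ProductWeights

variable {ι : Type*} [Fintype ι] [DecidableEq ι] {κ : ι → Type*} [∀ i, Fintype (κ i)]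
  {w : ∀ i, κ i → ℝ}

theorem Fintype.sum_prod_mul_eval (hw : ∀ i, ∑ k, w i k = 1) (q : ι) (G : κ q → ℝ) :
    ∑ a : ∀ i, κ i, (∏ i, w i (a i)) * G (a q) = ∑ k, w q k * G k := by
  rw [← (Equiv.piSplitAt q κ).symm.sum_comp, Fintype.sum_prod_type]
  refine Finset.sum_congr rfl fun k _ => ?_
  have hrest : ∑ r : ∀ i : {i // i ≠ q}, κ i, ∏ i, w i.1 (r i) = 1 := by
    rw [← Fintype.prod_sum]; exact Finset.prod_eq_one fun i _ => hw i
  simp only [Fintype.prod_eq_mul_prod_subtype_ne _ q, Equiv.piSplitAt_symm_apply, dite_true]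
  rw [← mul_one (w q k * G k), ← hrest, Finset.mul_sum]
  refine Finset.sum_congr rfl fun r _ => ?_
  rw [Finset.prod_congr rfl fun i _ => by rw [dif_neg i.2]]
  ring

theorem Fintype.sum_prod_mul_eval_eval (hw : ∀ i, ∑ k, w i k = 1) {p q : ι} (hpq : p ≠ q)
    (F : κ p → κ q → ℝ) :
    ∑ a : ∀ i, κ i, (∏ i, w i (a i)) * F (a p) (a q) = ∑ j, ∑ k, w p j * w q k * F j k := by
  rw [← (Equiv.piSplitAt p κ).symm.sum_comp, Fintype.sum_prod_type]
  refine Finset.sum_congr rfl fun j _ => ?_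
  have hrest := Fintype.sum_prod_mul_eval (w := fun i : {i // i ≠ p} => w i) (fun i => hw i)
    ⟨q, hpq.symm⟩ (F j)
  simp only [Fintype.prod_eq_mul_prod_subtype_ne _ p, Equiv.piSplitAt_symm_apply, dite_true,
    dif_neg hpq.symm]
  simp only [mul_assoc, ← Finset.mul_sum, ← hrest]
  congr 1
  refine Finset.sum_congr rfl fun r _ => ?_
  rw [Finset.prod_congr rfl fun i _ => by rw [dif_neg i.2]]

end ProductWeights

theorem Finset.sum_ciSup_le {ι : Type*} {κ : ι → Sort*} [∀ i, Nonempty (κ i)] (s : Finset ι)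
    (g : ∀ i, κ i → ℝ) {c : ℝ} (h : ∀ k : ∀ i, κ i, ∑ i ∈ s, g i (k i) ≤ c) :
    ∑ i ∈ s, ⨆ k, g i k ≤ c := by
  classical
  induction s using Finset.induction_on generalizing c with
  | empty => simpa using h fun _ => Classical.arbitrary _
  | insert a s ha ih =>
    rw [Finset.sum_insert ha, ← le_sub_iff_add_le']
    refine ih fun k => le_sub_comm.1 <| ciSup_le fun ka => le_sub_iff_add_le.2 ?_
    have := h (Function.update k a ka)
    rwa [Finset.sum_insert ha, Function.update_self, Finset.sum_congr rfl fun i hi => by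
      rw [Function.update_of_ne (ne_of_mem_of_not_mem hi ha)]] at this

section ConcaveEnvelope

variable {E : Type*} [AddCommGroup E] [Module ℝ E]

structure ConvexDecomposition (Ω : Set E) (x : E) where
  n : ℕ
  weight : Fin n → ℝ
  point : Fin n → E
  weight_nonneg : ∀ j, 0 ≤ weight j
  sum_weight : ∑ j, weight j = 1
  point_mem : ∀ j, point j ∈ Ω
  sum_weight_smul : ∑ j, weight j • point j = x

namespace ConvexDecomposition

variable {Ω : Set E} {x y : E}

def average (D : ConvexDecomposition Ω x) (f : E → ℝ) : ℝ := ∑ j, D.weight j * f (D.point j)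

def single (hx : x ∈ Ω) : ConvexDecomposition Ω x where
  n := 1
  weight _ := 1
  point _ := x
  weight_nonneg _ := zero_le_one
  sum_weight := by simp
  point_mem _ := hx
  sum_weight_smul := by simp

@[simp]
theorem average_single (hx : x ∈ Ω) (f : E → ℝ) : (single hx).average f = f x := by
  show ∑ _j : Fin 1, 1 * f x = f x
  simp

def convexComb (D₁ : ConvexDecomposition Ω x) (D₂ : ConvexDecomposition Ω y) {t s : ℝ}
    (ht : 0 ≤ t) (hs : 0 ≤ s) (hts : t + s = 1) : ConvexDecomposition Ω (t • x + s • y) where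
  n := D₁.n + D₂.n
  weight := Fin.append (fun j => t * D₁.weight j) (fun j => s * D₂.weight j)
  point := Fin.append D₁.point D₂.point
  weight_nonneg := Fin.addCases (fun j => by simpa using mul_nonneg ht (D₁.weight_nonneg j))
    (fun j => by simpa using mul_nonneg hs (D₂.weight_nonneg j))
  sum_weight := by
    simp [Fin.sum_univ_add, ← Finset.mul_sum, D₁.sum_weight, D₂.sum_weight, hts]
  point_mem := Fin.addCases (fun j => by simpa using D₁.point_mem j)
    (fun j => by simpa using D₂.point_mem j)
  sum_weight_smul := by
    simp [Fin.sum_univ_add, mul_smul, ← Finset.smul_sum, D₁.sum_weight_smul, D₂.sum_weight_smul]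

theorem average_convexComb (D₁ : ConvexDecomposition Ω x) (D₂ : ConvexDecomposition Ω y)
    {t s : ℝ} (ht : 0 ≤ t) (hs : 0 ≤ s) (hts : t + s = 1) (f : E → ℝ) :
    (D₁.convexComb D₂ ht hs hts).average f = t * D₁.average f + s * D₂.average f := by
  change ∑ j, Fin.append (fun j => t * D₁.weight j) (fun j => s * D₂.weight j) j *
    f (Fin.append D₁.point D₂.point j) = _
  simp [Fin.sum_univ_add, average, Finset.mul_sum, mul_assoc]

theorem average_le (D : ConvexDecomposition Ω x) {f : E → ℝ} {B : ℝ} (hf : ∀ z ∈ Ω, f z ≤ B) :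
    D.average f ≤ B :=
  calc D.average f ≤ ∑ j, D.weight j * B := Finset.sum_le_sum fun j _ =>
        mul_le_mul_of_nonneg_left (hf _ (D.point_mem j)) (D.weight_nonneg j)
    _ = B := by rw [← Finset.sum_mul, D.sum_weight, one_mul]

theorem sum_weight_smul_sub (D : ConvexDecomposition Ω x) (y : E) :
    ∑ j, D.weight j • (y - D.point j) = y - x := by
  simp [smul_sub, Finset.sum_sub_distrib, ← Finset.sum_smul, D.sum_weight, D.sum_weight_smul]

end ConvexDecomposition

open ConvexDecomposition

/-- Outside the convex hull of `Ω`, or when `f` is unbounded above on `Ω`, this takes the junk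
value `0`. -/
def concaveEnvelope (Ω : Set E) (f : E → ℝ) (x : E) : ℝ :=
  ⨆ D : ConvexDecomposition Ω x, D.average f

variable {Ω : Set E} {f : E → ℝ} {x : E}

theorem bddAbove_range_average (hf : BddAbove (f '' Ω)) :
    BddAbove (Set.range fun D : ConvexDecomposition Ω x => D.average f) := by
  obtain ⟨B, hB⟩ := hf
  exact ⟨B, Set.forall_mem_range.2 fun D => D.average_le fun z hz => hB ⟨z, hz, rfl⟩⟩

theorem average_le_concaveEnvelope (hf : BddAbove (f '' Ω)) (D : ConvexDecomposition Ω x) :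
    D.average f ≤ concaveEnvelope Ω f x :=
  le_ciSup (bddAbove_range_average hf) D

theorem le_concaveEnvelope (hf : BddAbove (f '' Ω)) (hx : x ∈ Ω) : f x ≤ concaveEnvelope Ω f x := by
  simpa using average_le_concaveEnvelope hf (single hx)

theorem concaveOn_concaveEnvelope (hΩ : Convex ℝ Ω) (hf : BddAbove (f '' Ω)) :
    ConcaveOn ℝ Ω (concaveEnvelope Ω f) := by
  refine ⟨hΩ, fun a ha b hb t s ht hs hts => ?_⟩
  have := Nonempty.intro (single ha)
  have := Nonempty.intro (single hb)
  simp only [concaveEnvelope, smul_eq_mul, Real.mul_iSup_of_nonneg ht,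
    Real.mul_iSup_of_nonneg hs]
  refine ciSup_add_ciSup_le fun D₁ D₂ => ?_
  rw [← average_convexComb D₁ D₂ ht hs hts]
  exact average_le_concaveEnvelope hf _

theorem convexOn_concaveEnvelope_of_convexOn {P : Type*} [AddCommGroup P] [Module ℝ P]
    {s : Set P} (hs : Convex ℝ s) {f : P → E → ℝ} (hf : ∀ z ∈ Ω, ConvexOn ℝ s (f · z))
    (hbdd : ∀ y ∈ s, BddAbove (f y '' Ω)) (hx : x ∈ Ω) :
    ConvexOn ℝ s (fun y => concaveEnvelope Ω (f y) x) := by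
  have := Nonempty.intro (single hx)
  refine ⟨hs, fun y₁ hy₁ y₂ hy₂ t r ht hr htr => ciSup_le fun D => ?_⟩
  calc D.average (f (t • y₁ + r • y₂))
      ≤ t * D.average (f y₁) + r * D.average (f y₂) := by
        simp only [ConvexDecomposition.average, Finset.mul_sum, ← Finset.sum_add_distrib]
        refine Finset.sum_le_sum fun j _ => ?_
        have hj := (hf _ (D.point_mem j)).2 hy₁ hy₂ ht hr htr
        simp only [smul_eq_mul] at hj
        exact (mul_le_mul_of_nonneg_left hj (D.weight_nonneg j)).trans_eq (by ring)
    _ ≤ t * concaveEnvelope Ω (f y₁) x + r * concaveEnvelope Ω (f y₂) x := by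
        gcongr
        · exact average_le_concaveEnvelope (hbdd y₁ hy₁) D
        · exact average_le_concaveEnvelope (hbdd y₂ hy₂) D

end ConcaveEnvelope

open Fin.NatCast

theorem cyc_iterate_apply {N : ℕ} {α : Type*} (x : Fin N → α) (v j : Fin N) :
    (cyc^[v] x) j = x (j + v) := by
  have h : ∀ k, cyc^[k] x = x ∘ (finRotate N)^[k] := by
    intro k
    induction k with
    | zero => rfl
    | succ k ih => rw [Function.iterate_succ_apply', ih, Function.iterate_succ]; rfl
  rw [h, ← finCycle_eq_finRotate_iterate]
  rfl

section Cycles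

variable {N : ℕ} [NeZero N]

theorem sum_Icc_one_natCast {M : Type*} [AddCancelCommMonoid M] (g : Fin N → M) :
    ∑ i ∈ Icc 1 N, g i = ∑ v, g v := by
  have h := Finset.sum_range_succ' (fun i : ℕ => g i) N
  rw [Finset.sum_range_succ, Fin.natCast_self, Nat.cast_zero, add_left_inj] at h
  rw [← Finset.Ico_add_one_right_eq_Icc, Finset.sum_Ico_eq_sum_range, Nat.add_sub_cancel]
  simp only [add_comm 1]
  rw [← h, ← Fin.sum_univ_eq_sum_range (fun i : ℕ => g i)]
  simp only [Fin.cast_val_eq_self]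

theorem JointlyNMonotone.cycle_nonneg {d : ℕ} {Ω : Set (Ed d)} {u : ℕ → Ed d → Ed d}
    (hmono : JointlyNMonotone N Ω u) (p : Fin N → Ed d) (hp : ∀ v, p v ∈ Ω) :
    0 ≤ ∑ v, ∑ ℓ ∈ Icc 1 (N - 1), ⟪u ℓ (p v), p v - p (v + ℓ)⟫ := by
  have h := hmono (fun n => p n) (fun _ _ _ => hp _) (fun i _ _ => by simp)
  simpa only [Nat.cast_add, sum_Icc_one_natCast fun v =>
    ∑ ℓ ∈ Icc 1 (N - 1), ⟪u ℓ (p v), p v - p (v + ℓ)⟫] using h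

end Cycles

section LinearCost

variable {d N : ℕ} [NeZero N]

def linearCost (u : ℕ → Ed d → Ed d) (w : Ed d) (y : Fin N → Ed d) : ℝ :=
  ∑ ℓ ∈ Icc 1 (N - 1), ⟪u ℓ w, y ℓ - w⟫

def costEnvelope (Ω : Set (Ed d)) (u : ℕ → Ed d → Ed d) (x : Fin N → Ed d) : ℝ :=
  concaveEnvelope Ω (linearCost u · x) (x 0)

variable {Ω : Set (Ed d)} {u : ℕ → Ed d → Ed d}

theorem natCast_ne_zero_of_mem_Icc {ℓ : ℕ} (hℓ : ℓ ∈ Icc 1 (N - 1)) : (ℓ : Fin N) ≠ 0 := by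
  rw [Ne, Fin.natCast_eq_zero]
  rw [mem_Icc] at hℓ
  exact Nat.not_dvd_of_pos_of_lt (by omega) (by omega)

theorem linearCost_update_zero (w z : Ed d) (y : Fin N → Ed d) :
    linearCost u w (Function.update y 0 z) = linearCost u w y :=
  Finset.sum_congr rfl fun _ hℓ => by rw [Function.update_of_ne (natCast_ne_zero_of_mem_Icc hℓ)]

theorem convexOn_linearCost {s : Set (Fin N → Ed d)} (hs : Convex ℝ s) (w : Ed d) :
    ConvexOn ℝ s (linearCost u w) := by
  refine ⟨hs, fun y₁ _ y₂ _ t r _ _ htr => le_of_eq ?_⟩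
  simp only [linearCost, smul_eq_mul, Finset.mul_sum, ← Finset.sum_add_distrib]
  refine Finset.sum_congr rfl fun ℓ _ => ?_
  simp only [Pi.add_apply, Pi.smul_apply, inner_sub_right, inner_add_right, real_inner_smul_right]
  linear_combination ⟪u ℓ w, w⟫ * htr

theorem bddAbove_image_linearCost (hΩ : Bornology.IsBounded Ω)
    (hu : ∀ ℓ ∈ Icc 1 (N - 1), ∃ C : ℝ, ∀ x ∈ Ω, ‖u ℓ x‖ ≤ C) {y : Fin N → Ed d}
    (hy : ∀ i, y i ∈ Ω) : BddAbove ((linearCost u · y) '' Ω) := by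
  obtain ⟨R, hR⟩ := hΩ.exists_norm_le
  choose! C hC using hu
  refine ⟨∑ ℓ ∈ Icc 1 (N - 1), C ℓ * (R + R), ?_⟩
  rintro _ ⟨w, hw, rfl⟩
  refine Finset.sum_le_sum fun ℓ hℓ => ?_
  have hR0 : 0 ≤ R + R := by linarith [norm_nonneg w, hR w hw]
  calc ⟪u ℓ w, y ℓ - w⟫ ≤ ‖u ℓ w‖ * ‖y ℓ - w‖ := real_inner_le_norm _ _
    _ ≤ ‖u ℓ w‖ * (R + R) := by
        gcongr
        exact (norm_sub_le _ _).trans (add_le_add (hR _ (hy _)) (hR _ hw))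
    _ ≤ C ℓ * (R + R) := by gcongr; exact hC ℓ hℓ w hw

end LinearCost

section Envelope

variable {d N : ℕ} [NeZero N] {Ω : Set (Ed d)} {u : ℕ → Ed d → Ed d}

theorem JointlyNMonotone.sum_average_linearCost_nonpos (hmono : JointlyNMonotone N Ω u)
    (x : Fin N → Ed d) (D : ∀ v : Fin N, ConvexDecomposition Ω ((cyc^[v] x) 0)) :
    ∑ v, (D v).average (linearCost u · (cyc^[v] x)) ≤ 0 := by
  classical
  set π : (∀ v, Fin (D v).n) → ℝ := fun a => ∏ v, (D v).weight (a v)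
  set p : (∀ v, Fin (D v).n) → Fin N → Ed d := fun a v => (D v).point (a v)
  have hmarginal : ∀ v, ∀ ℓ ∈ Icc 1 (N - 1),
      ∑ a, π a * ⟪u ℓ (p a v), p a v - p a (v + ℓ)⟫
        = -∑ j, (D v).weight j * ⟪u ℓ ((D v).point j), x (ℓ + v) - (D v).point j⟫ := by
    intro v ℓ hℓ
    have hne : v ≠ v + ℓ := fun h => natCast_ne_zero_of_mem_Icc hℓ (by simpa using h.symm)
    refine (Fintype.sum_prod_mul_eval_eval (fun v => (D v).sum_weight) hne fun j k =>
      ⟪u ℓ ((D v).point j), (D v).point j - (D (v + ℓ)).point k⟫).trans ?_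
    rw [← Finset.sum_neg_distrib]
    refine Finset.sum_congr rfl fun j _ => ?_
    have hbar : ∑ k, (D (v + ℓ)).weight k • ((D v).point j - (D (v + ℓ)).point k)
        = (D v).point j - x (ℓ + v) :=
      ((D (v + ℓ)).sum_weight_smul_sub _).trans
        (by rw [cyc_iterate_apply x (v + ℓ) 0, zero_add, add_comm])
    rw [← mul_neg, ← inner_neg_right, neg_sub, ← hbar, inner_sum, Finset.mul_sum]
    simp only [real_inner_smul_right, mul_assoc]
  have hcycle : 0 ≤ ∑ a, π a * ∑ v, ∑ ℓ ∈ Icc 1 (N - 1), ⟪u ℓ (p a v), p a v - p a (v + ℓ)⟫ :=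
    Finset.sum_nonneg fun a _ => mul_nonneg (Finset.prod_nonneg fun v _ => (D v).weight_nonneg _)
      (hmono.cycle_nonneg (p a) fun v => (D v).point_mem _)
  have hswap : ∀ v, ∑ a, ∑ ℓ ∈ Icc 1 (N - 1), π a * ⟪u ℓ (p a v), p a v - p a (v + ℓ)⟫
      = -(D v).average (linearCost u · (cyc^[v] x)) := by
    intro v
    rw [Finset.sum_comm, Finset.sum_congr rfl (hmarginal v), Finset.sum_neg_distrib,
      Finset.sum_comm]
    simp only [ConvexDecomposition.average, linearCost, Finset.mul_sum, cyc_iterate_apply]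
  simp only [Finset.mul_sum] at hcycle
  rw [Finset.sum_comm, Finset.sum_congr rfl fun v _ => hswap v, Finset.sum_neg_distrib] at hcycle
  linarith

theorem JointlyNMonotone.nSubAntisymmetric_costEnvelope (hmono : JointlyNMonotone N Ω u) :
    NSubAntisymmetric N Ω (costEnvelope Ω u) := by
  intro x hx
  have (v : Fin N) : Nonempty (ConvexDecomposition Ω ((cyc^[v] x) 0)) :=
    ⟨ConvexDecomposition.single (by rw [cyc_iterate_apply, zero_add]; exact hx v)⟩
  rw [← Fin.sum_univ_eq_sum_range fun i => costEnvelope Ω u (cyc^[i] x)]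
  exact Finset.sum_ciSup_le _ _ (hmono.sum_average_linearCost_nonpos x)

theorem costEnvelope_update_zero (y : Fin N → Ed d) (z : Ed d) :
    costEnvelope Ω u (Function.update y 0 z) = concaveEnvelope Ω (linearCost u · y) z := by
  simp only [costEnvelope, linearCost_update_zero, Function.update_self]

theorem JointlyNMonotone.costEnvelope_const (hmono : JointlyNMonotone N Ω u)
    (hΩ : Bornology.IsBounded Ω) (hu : ∀ ℓ ∈ Icc 1 (N - 1), ∃ C : ℝ, ∀ x ∈ Ω, ‖u ℓ x‖ ≤ C)
    {x : Ed d} (hx : x ∈ Ω) : costEnvelope Ω u (fun _ : Fin N => x) = 0 := by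
  have hcyc (i : ℕ) : cyc^[i] (fun _ : Fin N => x) = fun _ => x := Function.iterate_fixed rfl i
  have hle := hmono.nSubAntisymmetric_costEnvelope (fun _ => x) fun _ => hx
  simp only [hcyc, Finset.sum_const, Finset.card_range, nsmul_eq_mul] at hle
  have hge : linearCost u x (fun _ : Fin N => x) ≤ costEnvelope Ω u (fun _ => x) :=
    le_concaveEnvelope (bddAbove_image_linearCost hΩ hu fun _ => hx) hx
  simp only [linearCost, sub_self, inner_zero_right, Finset.sum_const_zero] at hge
  exact le_antisymm (nonpos_of_mul_nonpos_right hle (by simp [Nat.pos_of_neZero N])) hge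

end Envelope

theorem statement0_general {d : ℕ} (N : ℕ) [NeZero N]
    (Ω : Set (Ed d)) (hΩconv : Convex ℝ Ω)
    (hΩbdd : Bornology.IsBounded Ω)
    (u : ℕ → Ed d → Ed d)
    (hubdd : ∀ ℓ ∈ Icc 1 (N - 1), ∃ C : ℝ, ∀ x ∈ Ω, ‖u ℓ x‖ ≤ C)
    (hmono : JointlyNMonotone N Ω u) :
    ∃ H : (Fin N → Ed d) → ℝ,
      -- (i) `H` is `N`-sub-antisymmetric
      NSubAntisymmetric N Ω H ∧
      -- (ii) `H` vanishes on the diagonal of `Ω^N`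
      (∀ x ∈ Ω, H (fun _ => x) = 0) ∧
      -- (iii) `H` is concave in the first variable
      (∀ x : Fin N → Ed d, (∀ i, x i ∈ Ω) →
        ConcaveOn ℝ Ω (fun z => H (Function.update x 0 z))) ∧
      -- (iv) `H` is jointly convex in the last `N-1` variables
      (∀ x₁ ∈ Ω, ConvexOn ℝ {y : Fin N → Ed d | ∀ i, y i ∈ Ω}
        (fun y => H (Function.update y 0 x₁))) ∧
      -- (v) the subgradient inequality
      (∀ x ∈ Ω, ∀ y : Fin N → Ed d, (∀ i, y i ∈ Ω) →
        ∑ ℓ ∈ Icc 1 (N - 1), ⟪u ℓ x, y (Fin.ofNat N ℓ) - x⟫ ≤ H (Function.update y 0 x)) := by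
  have hbdd {y : Fin N → Ed d} (hy : ∀ i, y i ∈ Ω) := bddAbove_image_linearCost hΩbdd hubdd hy
  refine ⟨costEnvelope Ω u, hmono.nSubAntisymmetric_costEnvelope,
    fun x hx => hmono.costEnvelope_const hΩbdd hubdd hx, fun x hx => ?_, fun x₁ hx₁ => ?_,
    fun x hx y hy => ?_⟩
  · simp only [costEnvelope_update_zero]
    exact concaveOn_concaveEnvelope hΩconv (hbdd hx)
  · have hΩN : Convex ℝ {y : Fin N → Ed d | ∀ i, y i ∈ Ω} :=
      fun y₁ h₁ y₂ h₂ t s ht hs hts i => hΩconv (h₁ i) (h₂ i) ht hs hts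
    simp only [costEnvelope_update_zero]
    exact convexOn_concaveEnvelope_of_convexOn hΩN (fun w _ => convexOn_linearCost hΩN w)
      (fun _ => hbdd) hx₁
  · rw [costEnvelope_update_zero]
    exact le_concaveEnvelope (hbdd hy) hx

theorem statement0 {d : ℕ} (N : ℕ) [NeZero N] (hN : 2 ≤ N)
    (Ω : Set (Ed d)) (hΩopen : IsOpen Ω) (hΩconv : Convex ℝ Ω)
    (hΩbdd : Bornology.IsBounded Ω) (hΩne : Ω.Nonempty)
    (u : ℕ → Ed d → Ed d)
    (hubdd : ∀ ℓ ∈ Icc 1 (N - 1), ∃ C : ℝ, ∀ x ∈ Ω, ‖u ℓ x‖ ≤ C)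
    (hmono : JointlyNMonotone N Ω u) :
    ∃ H : (Fin N → Ed d) → ℝ,
      -- (i) `H` is `N`-sub-antisymmetric
      NSubAntisymmetric N Ω H ∧
      -- (ii) `H` vanishes on the diagonal of `Ω^N`
      (∀ x ∈ Ω, H (fun _ => x) = 0) ∧
      -- (iii) `H` is concave in the first variable
      (∀ x : Fin N → Ed d, (∀ i, x i ∈ Ω) →
        ConcaveOn ℝ Ω (fun z => H (Function.update x 0 z))) ∧
      -- (iv) `H` is jointly convex in the last `N-1` variables
      (∀ x₁ ∈ Ω, ConvexOn ℝ {y : Fin N → Ed d | ∀ i, y i ∈ Ω}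
        (fun y => H (Function.update y 0 x₁))) ∧
      -- (v) the subgradient inequality
      (∀ x ∈ Ω, ∀ y : Fin N → Ed d, (∀ i, y i ∈ Ω) →
        ∑ ℓ ∈ Icc 1 (N - 1), ⟪u ℓ x, y (Fin.ofNat N ℓ) - x⟫ ≤ H (Function.update y 0 x)) :=
  statement0_general N Ω hΩconv hΩbdd u hubdd hmono
end
end

section
/- Let N ≥ 2, let Ω be a convex bounded domain in ℝ^d, and let u_1,…,u_{N−1} : Ω → ℝ^d. Suppose H : Ω^N → ℝ is N-sub-antisymmetric, vanishes on the diagonal (H(x,…,x)=0 for all x ∈ Ω), and satisfies: for every x ∈ Ω and every (y_1,…,y_{N−1}) ∈ Ω^{N−1}, H(x,y_1,…,y_{N−1}) ≥ ∑_{ℓ=1}^{N−1} ⟨u_ℓ(x), y_ℓ − x⟩. Then the (N−1)-tuple (u_1,…,u_{N−1}) is jointly N-monotone on Ω. -/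
open MeasureTheory Finset
open scoped BigOperators RealInnerProductSpace

noncomputable section

/-- `H` is `N`-antisymmetric on `Ω^N` : `∑_{i=0}^{N-1} H(σ^i x) = 0` on `Ω^N`. -/
def NAntisymmetric (N : ℕ) {d : ℕ} (Ω : Set (Ed d)) (H : (Fin N → Ed d) → ℝ) : Prop :=
  ∀ x : Fin N → Ed d, (∀ i, x i ∈ Ω) → ∑ i ∈ range N, H (cyc^[i] x) = 0

/-- `u` is `N`-cyclically monotone on `Ω`: for every cycle `x 1, …, x N, x (N+1) = x 1`
of points of `Ω`, `∑_{i=1}^{N} ⟨u (x i), x i - x (i+1)⟩ ≥ 0`. -/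
def NCyclicallyMonotone (N : ℕ) {d : ℕ} (Ω : Set (Ed d)) (u : Ed d → Ed d) : Prop :=
  ∀ x : ℕ → Ed d,
    (∀ i, 1 ≤ i → i ≤ N → x i ∈ Ω) → x (N + 1) = x 1 →
    0 ≤ ∑ i ∈ Icc 1 N, ⟪u (x i), x i - x (i + 1)⟫

/-! Apply the subgradient inequality at each point `x i` of the cycle, with the other arguments
`x (i+1), …, x (i+N-1)`. Because the cycle is periodic, these `N` tuples are the cyclic shifts
of one another, so summing the inequalities and using sub-antisymmetry gives the claim. -/

def window {α : Type*} (N : ℕ) (x : ℕ → α) (i : ℕ) : Fin N → α := fun j => x (i + j)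

lemma cyc_window {α : Type*} {N : ℕ} (x : ℕ → α) (i : ℕ) (hper : x (i + N) = x i) :
    cyc (window N x i) = window N x (i + 1) := by
  funext j
  obtain _ | n := N
  · exact j.elim0
  simp only [cyc, window, Function.comp_apply, coe_finRotate]
  split_ifs with hj
  · subst hj
    rw [Fin.val_last, Nat.add_zero, ← hper]
    congr 1
    omega
  · rw [Nat.add_assoc, Nat.add_comm 1]

lemma iterate_cyc_window {α : Type*} {N : ℕ} (x : ℕ → α) (i m : ℕ)
    (hper : ∀ k < m, x (i + k + N) = x (i + k)) :
    cyc^[m] (window N x i) = window N x (i + m) := by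
  induction m with
  | zero => rfl
  | succ m ih =>
    rw [Function.iterate_succ_apply', ih fun k hk => hper k (by omega),
      cyc_window x _ (hper m (by omega)), Nat.add_assoc]

lemma window_mem {α : Type*} {N : ℕ} {s : Set α} {x : ℕ → α}
    (hx : ∀ i, 1 ≤ i → i ≤ 2 * N - 1 → x i ∈ s) {i : ℕ} (hi : i ∈ Icc 1 N) (j : Fin N) :
    window N x i j ∈ s := by
  rw [mem_Icc] at hi
  exact hx _ (by omega) (by have := j.isLt; omega)

lemma window_ofNat {α : Type*} {N : ℕ} [NeZero N] (x : ℕ → α) (i : ℕ) {ℓ : ℕ} (hℓ : ℓ < N) :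
    window N x i (Fin.ofNat N ℓ) = x (i + ℓ) := by
  simp [window, Nat.mod_eq_of_lt hℓ]

lemma NSubAntisymmetric.sum_window_nonpos {d N : ℕ} {Ω : Set (Ed d)} {H : (Fin N → Ed d) → ℝ}
    (hH : NSubAntisymmetric N Ω H) {x : ℕ → Ed d}
    (hx : ∀ i, 1 ≤ i → i ≤ 2 * N - 1 → x i ∈ Ω)
    (hper : ∀ i, 1 ≤ i → i ≤ N - 1 → x (N + i) = x i) :
    ∑ i ∈ Icc 1 N, H (window N x i) ≤ 0 := by
  have hshift : ∀ k ∈ range N, H (window N x (1 + k)) = H (cyc^[k] (window N x 1)) := by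
    intro k hk
    rw [iterate_cyc_window x 1 k fun k' hk' => ?_]
    rw [Nat.add_comm _ N]
    exact hper _ (by omega) (by have := mem_range.mp hk; omega)
  rw [← Ico_add_one_right_eq_Icc, sum_Ico_eq_sum_range, Nat.add_sub_cancel, sum_congr rfl hshift]
  exact hH _ fun j => hx _ (Nat.le_add_right 1 _) (by have := j.isLt; omega)

theorem statement3_general {d : ℕ} (N : ℕ) [NeZero N]
    (Ω : Set (Ed d))
    (u : ℕ → Ed d → Ed d)
    (H : (Fin N → Ed d) → ℝ)
    -- `H` is `N`-sub-antisymmetric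
    (hsub : NSubAntisymmetric N Ω H)
    -- the subgradient inequality
    (hsubgrad : ∀ x ∈ Ω, ∀ y : Fin N → Ed d, (∀ i, y i ∈ Ω) →
      ∑ ℓ ∈ Icc 1 (N - 1), ⟪u ℓ x, y (Fin.ofNat N ℓ) - x⟫ ≤ H (Function.update y 0 x)) :
    JointlyNMonotone N Ω u := by
  intro x hx hper
  have hwindow : ∀ i ∈ Icc 1 N,
      ∑ ℓ ∈ Icc 1 (N - 1), ⟪u ℓ (x i), x (i + ℓ) - x i⟫ ≤ H (window N x i) := by
    intro i hi
    have h := hsubgrad _ (window_mem hx hi 0) _ (window_mem hx hi)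
    rw [Function.update_eq_self] at h
    refine le_of_eq_of_le (sum_congr rfl fun ℓ hℓ => ?_) h
    rw [window_ofNat x i (by rw [mem_Icc] at hℓ; omega)]
    simp [window]
  calc 0 ≤ -∑ i ∈ Icc 1 N, H (window N x i) := neg_nonneg.mpr (hsub.sum_window_nonpos hx hper)
    _ ≤ -∑ i ∈ Icc 1 N, ∑ ℓ ∈ Icc 1 (N - 1), ⟪u ℓ (x i), x (i + ℓ) - x i⟫ :=
      neg_le_neg (sum_le_sum hwindow)
    _ = _ := by simp only [← sum_neg_distrib, ← inner_neg_right, neg_sub]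

theorem statement3 {d : ℕ} (N : ℕ) [NeZero N] (hN : 2 ≤ N)
    (Ω : Set (Ed d)) (hΩopen : IsOpen Ω) (hΩconv : Convex ℝ Ω)
    (hΩbdd : Bornology.IsBounded Ω) (hΩne : Ω.Nonempty)
    (u : ℕ → Ed d → Ed d)
    (H : (Fin N → Ed d) → ℝ)
    -- `H` is `N`-sub-antisymmetric
    (hsub : NSubAntisymmetric N Ω H)
    -- `H` vanishes on the diagonal
    (hdiag : ∀ x ∈ Ω, H (fun _ => x) = 0)
    -- the subgradient inequality
    (hsubgrad : ∀ x ∈ Ω, ∀ y : Fin N → Ed d, (∀ i, y i ∈ Ω) →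
      ∑ ℓ ∈ Icc 1 (N - 1), ⟪u ℓ x, y (Fin.ofNat N ℓ) - x⟫ ≤ H (Function.update y 0 x)) :
    JointlyNMonotone N Ω u :=
  statement3_general N Ω u H hsub hsubgrad
end
end

section
/- Let N ≥ 2, let Ω be a convex bounded domain in ℝ^d, and let u : Ω → ℝ^d be a bounded N-cyclically monotone vector field. Then there exists a function F : Ω × Ω → ℝ such that: (i) F is concave in the first variable and convex in the second variable; (ii) F is N-cyclically sub-antisymmetric, i.e. F(x,x)=0 for all x ∈ Ω and ∑_{i=1}^{N} F(x_i, x_{i+1}) ≤ 0 for every cyclic family x_1,…,x_N,x_{N+1}=x_1 in Ω; (iii) ⟨u(x_1), x_2 − x_1⟩ ≤ F(x_1,x_2) ≤ ⟨u(x_2), x_2 − x_1⟩ for all x_1, x_2 ∈ Ω, so that (−u(x), u(x)) belongs to the subdifferential of the concave-convex function F at (x,x) for every x ∈ Ω; and (iv) for almost every x ∈ Ω, the convex function y ↦ F(x,y) is differentiable at y = x with gradient u(x). -/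
open MeasureTheory Finset
open scoped BigOperators RealInnerProductSpace

noncomputable section

/-!
`F(x, y)` is the supremum of `∑ⱼ λⱼ ⟪u zⱼ, y - zⱼ⟫` over all ways of writing `x = ∑ⱼ λⱼ zⱼ` as a
convex combination of points of `Ω`: the concave envelope in `x` of `⟪u x, y - x⟫`. It is concave
in `x` by construction and convex in `y` as a supremum of affine functions, and monotonicity of
`u` (cyclic monotonicity for 2-cycles) traps it between `⟪u x, y - x⟫` and `⟪u y, y - x⟫`.
After expanding all the decompositions, the cyclic sum `∑ F(xᵢ, xᵢ₊₁)` is affine in each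
decomposition separately, so it is a convex combination of sums over genuine cycles of points of
`Ω`, which are nonpositive by `N`-cyclic monotonicity.

The sandwich gives `∇_y F(x, x) = u x` wherever `u` is continuous at `x`, and a bounded monotone
map is continuous almost everywhere: by Minty's trick `x + w ↦ x` is `1`-Lipschitz on the
(fibrewise convex hull of the closed) graph of `u`; at a discontinuity point `x` the fibre over
`x` contains a segment, so `x` is the image of a point where a Lipschitz extension of this map is
either not differentiable or has singular derivative, and Rademacher's theorem and Sard's lemma
make the set of such images null.
-/

open Filter Topology
open scoped Pointwise

theorem csSup_finsetSum {ι M : Type*} [ConditionallyCompleteLattice M] [AddCommGroup M]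
    [AddLeftMono M] (s : Finset ι) {S : ι → Set M} (hne : ∀ i ∈ s, (S i).Nonempty)
    (hbdd : ∀ i ∈ s, BddAbove (S i)) :
    ∑ i ∈ s, sSup (S i) = sSup (∑ i ∈ s, S i) := by
  classical
  suffices (∑ i ∈ s, S i).Nonempty ∧ BddAbove (∑ i ∈ s, S i) ∧
      ∑ i ∈ s, sSup (S i) = sSup (∑ i ∈ s, S i) from this.2.2
  induction s using Finset.induction_on with
  | empty => simp [← Set.singleton_zero]
  | insert a s ha ih =>
    obtain ⟨hne', hbdd', heq⟩ := ih (fun i hi ↦ hne i (by simp [hi]))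
      (fun i hi ↦ hbdd i (by simp [hi]))
    have hne_a := hne a (by simp)
    have hbdd_a := hbdd a (by simp)
    simp only [Finset.sum_insert ha]
    exact ⟨hne_a.add hne', hbdd_a.add hbdd', by rw [heq, csSup_add hne_a hbdd_a hne' hbdd']⟩

section ProbWeight

variable {α : Type*}

structure IsProbWeight (Ω : Set α) (D : α →₀ ℝ) : Prop where
  nonneg : 0 ≤ D
  support_subset : ↑D.support ⊆ Ω
  mass : Finsupp.linearCombination ℝ (fun _ ↦ (1 : ℝ)) D = 1

variable {Ω : Set α} {D : α →₀ ℝ}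

theorem isProbWeight_single {z : α} (hz : z ∈ Ω) : IsProbWeight Ω (Finsupp.single z 1) where
  nonneg := by simp
  support_subset := by simpa using hz
  mass := by simp

namespace IsProbWeight

theorem linearCombination_const (hD : IsProbWeight Ω D) (c : ℝ) :
    Finsupp.linearCombination ℝ (fun _ ↦ c) D = c := by
  have h := hD.mass
  simp only [Finsupp.linearCombination_apply, smul_eq_mul, mul_one, Finsupp.sum] at h ⊢
  rw [← Finset.sum_mul, h, one_mul]

theorem linearCombination_mono (hD : IsProbWeight Ω D) {f g : α → ℝ}
    (hfg : ∀ z ∈ Ω, f z ≤ g z) :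
    Finsupp.linearCombination ℝ f D ≤ Finsupp.linearCombination ℝ g D := by
  simp only [Finsupp.linearCombination_apply, Finsupp.sum]
  exact Finset.sum_le_sum fun z hz ↦
    smul_le_smul_of_nonneg_left (hfg z (hD.support_subset hz)) (hD.nonneg z)

theorem affine_eq_sum (hD : IsProbWeight Ω D) (L : (α →₀ ℝ) →ₗ[ℝ] ℝ) (c : ℝ) :
    L D + c = D.sum fun z w ↦ w * (L (Finsupp.single z 1) + c) := by
  conv_lhs => rw [← Finsupp.sum_single D, map_finsuppSum, ← hD.linearCombination_const c,
    Finsupp.linearCombination_apply, ← Finsupp.sum_add]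
  refine Finsupp.sum_congr fun z _ ↦ ?_
  rw [← Finsupp.smul_single_one, map_smul, smul_eq_mul, smul_eq_mul, mul_add]

end IsProbWeight

theorem nonpos_of_affine_of_nonpos_single {ι : Type*} [DecidableEq ι]
    {Ψ : (ι → α →₀ ℝ) → ℝ}
    (haff : ∀ D a, ∃ L : (α →₀ ℝ) →ₗ[ℝ] ℝ, ∃ c, ∀ t, Ψ (Function.update D a t) = L t + c)
    (hsingle : ∀ z : ι → α, (∀ i, z i ∈ Ω) → Ψ (fun i ↦ Finsupp.single (z i) 1) ≤ 0)
    (s : Finset ι) {D : ι → α →₀ ℝ} (hD : ∀ i, IsProbWeight Ω (D i))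
    (hs : ∀ i ∉ s, ∃ z ∈ Ω, D i = Finsupp.single z 1) : Ψ D ≤ 0 := by
  induction s using Finset.induction_on generalizing D with
  | empty =>
    choose z hz hDz using fun i ↦ hs i (Finset.notMem_empty i)
    rw [show D = fun i ↦ Finsupp.single (z i) 1 from funext hDz]
    exact hsingle z hz
  | insert a s _ ih =>
    obtain ⟨L, c, hL⟩ := haff D a
    -- `Ψ` is affine in the `a`-th weight, so `Ψ D` averages its values at the masses of `D a`.
    have hD' : Ψ D = (D a).sum fun z w ↦ w * Ψ (Function.update D a (Finsupp.single z 1)) := by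
      simp only [hL]
      rw [← (hD a).affine_eq_sum, ← hL, Function.update_eq_self]
    rw [hD']
    refine Finset.sum_nonpos fun z hz ↦ mul_nonpos_of_nonneg_of_nonpos ((hD a).nonneg z) (ih ?_ ?_)
    · intro i
      rcases eq_or_ne i a with rfl | hia
      · simpa using isProbWeight_single ((hD i).support_subset hz)
      · simpa [hia] using hD i
    · intro i hi
      rcases eq_or_ne i a with rfl | hia
      · exact ⟨z, (hD i).support_subset hz, by simp⟩
      · simpa [hia] using hs i (by simp [hia, hi])

theorem exists_affine_sum_update {ι : Type*} [DecidableEq ι]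
    (B : (α →₀ ℝ) →ₗ[ℝ] (α →₀ ℝ) →ₗ[ℝ] ℝ) {I : Finset ι} {σ : ι → ι}
    (hσ : ∀ i ∈ I, σ i ≠ i) (D : ι → α →₀ ℝ) (a : ι) :
    ∃ L : (α →₀ ℝ) →ₗ[ℝ] ℝ, ∃ c, ∀ t,
      ∑ i ∈ I, B (Function.update D a t i) (Function.update D a t (σ i)) = L t + c := by
  -- As `σ` has no fixed point in `I`, no term involves the `a`-th weight twice.
  refine ⟨∑ i ∈ I, ((if i = a then B.flip (D (σ i)) else 0) + (if σ i = a then B (D i) else 0)),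
    ∑ i ∈ I, (if i = a ∨ σ i = a then 0 else B (D i) (D (σ i))), fun t ↦ ?_⟩
  rw [LinearMap.sum_apply, ← Finset.sum_add_distrib]
  refine Finset.sum_congr rfl fun i hi ↦ ?_
  have := hσ i hi
  by_cases h₁ : i = a <;> by_cases h₂ : σ i = a <;> simp_all

end ProbWeight

section MonotoneRel

variable {E : Type*} [NormedAddCommGroup E] [InnerProductSpace ℝ E]

def IsMonotoneRel (S : Set (E × E)) : Prop :=
  ∀ p ∈ S, ∀ q ∈ S, 0 ≤ ⟪p.2 - q.2, p.1 - q.1⟫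

theorem IsMonotoneRel.inner_sub_nonneg {Ω : Set E} {u : E → E}
    (hmono : IsMonotoneRel (Ω.graphOn u)) {a b : E} (ha : a ∈ Ω) (hb : b ∈ Ω) :
    0 ≤ ⟪u a - u b, a - b⟫ :=
  hmono (a, u a) ⟨a, ha, rfl⟩ (b, u b) ⟨b, hb, rfl⟩

theorem IsMonotoneRel.closure {S : Set (E × E)} (h : IsMonotoneRel S) :
    IsMonotoneRel (_root_.closure S) := by
  set T := {pq : (E × E) × (E × E) | 0 ≤ ⟪pq.1.2 - pq.2.2, pq.1.1 - pq.2.1⟫}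
  have hclosed : IsClosed T := isClosed_le continuous_const (by fun_prop)
  have hsub : _root_.closure S ×ˢ _root_.closure S ⊆ T := by
    rw [← closure_prod_eq]
    exact closure_minimal (fun pq hpq ↦ h _ hpq.1 _ hpq.2) hclosed
  exact fun p hp q hq ↦ hsub (Set.mk_mem_prod hp hq)

def fiberConvexHull (S : Set (E × E)) : Set (E × E) :=
  {p | p.2 ∈ convexHull ℝ {w | (p.1, w) ∈ S}}

theorem subset_fiberConvexHull (S : Set (E × E)) : S ⊆ fiberConvexHull S :=
  fun p hp ↦ subset_convexHull ℝ _ (by simpa using hp)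

theorem IsMonotoneRel.fiberConvexHull {S : Set (E × E)} (h : IsMonotoneRel S) :
    IsMonotoneRel (fiberConvexHull S) := by
  rintro ⟨x₁, w₁⟩ hw₁ ⟨x₂, w₂⟩ hw₂
  have hlin : IsLinearMap ℝ (⟪x₁ - x₂, ·⟫) := (innerₛₗ ℝ (x₁ - x₂)).isLinear
  have hw₂_le (a : E) (ha : (x₁, a) ∈ S) : ⟪x₁ - x₂, w₂⟫ ≤ ⟪x₁ - x₂, a⟫ := by
    refine convexHull_min (fun b hb ↦ ?_) (convex_halfSpace_le hlin _) hw₂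
    have := h _ ha _ hb
    simp only [inner_sub_left, sub_nonneg] at this
    show ⟪x₁ - x₂, b⟫ ≤ ⟪x₁ - x₂, a⟫
    rwa [real_inner_comm b, real_inner_comm a]
  have : ⟪x₁ - x₂, w₂⟫ ≤ ⟪x₁ - x₂, w₁⟫ :=
    convexHull_min hw₂_le (convex_halfSpace_ge hlin _) hw₁
  rwa [inner_sub_left, sub_nonneg, real_inner_comm, real_inner_comm _ w₁]

theorem IsMonotoneRel.norm_fst_sub_le {S : Set (E × E)} (h : IsMonotoneRel S) {p q : E × E}
    (hp : p ∈ S) (hq : q ∈ S) : ‖p.1 - q.1‖ ≤ ‖(p.1 + p.2) - (q.1 + q.2)‖ := by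
  have key : ‖p.1 - q.1‖ ^ 2 ≤ ‖(p.1 + p.2) - (q.1 + q.2)‖ * ‖p.1 - q.1‖ := by
    calc ‖p.1 - q.1‖ ^ 2 ≤ ‖p.1 - q.1‖ ^ 2 + ⟪p.2 - q.2, p.1 - q.1⟫ := by
          linarith [h p hp q hq]
      _ = ⟪(p.1 + p.2) - (q.1 + q.2), p.1 - q.1⟫ := by
          rw [show (p.1 + p.2) - (q.1 + q.2) = (p.1 - q.1) + (p.2 - q.2) by abel,
            inner_add_left, real_inner_self_eq_norm_sq]
      _ ≤ _ := real_inner_le_norm _ _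
  nlinarith [norm_nonneg (p.1 - q.1), norm_nonneg ((p.1 + p.2) - (q.1 + q.2))]

theorem IsMonotoneRel.exists_lipschitzWith [FiniteDimensional ℝ E] {S : Set (E × E)}
    (h : IsMonotoneRel S) :
    ∃ (K : NNReal) (P : E → E), LipschitzWith K P ∧ ∀ p ∈ S, P (p.1 + p.2) = p.1 := by
  set sum : E × E → E := fun p ↦ p.1 + p.2
  set P₀ : E → E := fun z ↦ (Function.invFunOn sum S z).1
  have hP₀ : ∀ p ∈ S, P₀ (sum p) = p.1 := by
    intro p hp
    have hmem : Function.invFunOn sum S (sum p) ∈ S := Function.invFunOn_mem ⟨p, hp, rfl⟩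
    have heq : sum (Function.invFunOn sum S (sum p)) = sum p := Function.invFunOn_eq ⟨p, hp, rfl⟩
    have := h.norm_fst_sub_le hmem hp
    simp only [sum] at heq this
    rw [heq, sub_self, norm_zero, norm_le_zero_iff, sub_eq_zero] at this
    exact this
  have hlip : LipschitzOnWith 1 P₀ (sum '' S) := by
    refine LipschitzOnWith.of_dist_le_mul fun _ ⟨p, hp, hpz⟩ _ ⟨q, hq, hqz⟩ ↦ ?_
    subst hpz hqz
    rw [hP₀ p hp, hP₀ q hq, NNReal.coe_one, one_mul, dist_eq_norm, dist_eq_norm]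
    exact h.norm_fst_sub_le hp hq
  obtain ⟨P, hP, hPeq⟩ := hlip.extend_finite_dimension
  exact ⟨_, P, hP, fun p hp ↦ (hPeq (Set.mem_image_of_mem sum hp)).symm.trans (hP₀ p hp)⟩

end MonotoneRel

section Cyclic

variable {E : Type*} [NormedAddCommGroup E] [InnerProductSpace ℝ E] {Ω : Set E} {u : E → E}
  {N : ℕ}

/-- `NCyclicallyMonotone` on an arbitrary real inner product space. -/
def CyclicallyMonotoneOn (N : ℕ) (Ω : Set E) (u : E → E) : Prop :=
  ∀ x : ℕ → E,
    (∀ i, 1 ≤ i → i ≤ N → x i ∈ Ω) → x (N + 1) = x 1 →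
    0 ≤ ∑ i ∈ Icc 1 N, ⟪u (x i), x i - x (i + 1)⟫

def cycSucc (N i : ℕ) : ℕ := if i = N then 1 else i + 1

theorem cycSucc_mem_Icc {i : ℕ} (hi : i ∈ Icc 1 N) : cycSucc N i ∈ Icc 1 N := by
  simp only [Finset.mem_Icc] at hi ⊢
  unfold cycSucc
  split_ifs <;> omega

theorem cycSucc_ne (hN : 2 ≤ N) (i : ℕ) : cycSucc N i ≠ i := by
  unfold cycSucc
  split_ifs <;> omega

theorem apply_cycSucc {α : Type*} {x : ℕ → α} (hx : x (N + 1) = x 1) (i : ℕ) :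
    x (cycSucc N i) = x (i + 1) := by
  unfold cycSucc
  split_ifs with h
  · rw [h, hx]
  · rfl

theorem CyclicallyMonotoneOn.sum_inner_cycSucc_nonpos (hcyc : CyclicallyMonotoneOn N Ω u)
    (z : ℕ → E) (hz : ∀ i ∈ Icc 1 N, z i ∈ Ω) :
    ∑ i ∈ Icc 1 N, ⟪u (z i), z (cycSucc N i) - z i⟫ ≤ 0 := by
  set x : ℕ → E := fun i ↦ if i = N + 1 then z 1 else z i
  have hxz : ∀ i ∈ Icc 1 N, x i = z i := fun i hi ↦ if_neg (by simp at hi; omega)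
  have hx₁ : x (N + 1) = x 1 := by simp [x]
  have h := hcyc x (fun i h₁ h₂ ↦ by
    rw [hxz i (Finset.mem_Icc.2 ⟨h₁, h₂⟩)]; exact hz i (Finset.mem_Icc.2 ⟨h₁, h₂⟩)) hx₁
  rw [← neg_nonneg, ← Finset.sum_neg_distrib]
  refine h.trans_eq (Finset.sum_congr rfl fun i hi ↦ ?_)
  rw [← apply_cycSucc hx₁, hxz i hi, hxz _ (cycSucc_mem_Icc hi), ← inner_neg_right, neg_sub]

theorem CyclicallyMonotoneOn.isMonotoneRel (hN : 2 ≤ N) (hcyc : CyclicallyMonotoneOn N Ω u) :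
    IsMonotoneRel (Ω.graphOn u) := by
  rintro _ ⟨a, ha, rfl⟩ _ ⟨b, hb, rfl⟩
  have h := hcyc.sum_inner_cycSucc_nonpos (fun i ↦ if i = 1 then a else b)
    (fun i _ ↦ by split_ifs <;> assumption)
  rw [Finset.sum_eq_add_of_mem 1 N (by simp; omega) (by simp; omega) (by omega)] at h
  · simp only [cycSucc, if_true, show (1 : ℕ) ≠ N by omega, show (1 : ℕ) + 1 ≠ 1 by omega,
      show N ≠ 1 by omega, if_false] at h
    have : ⟪u a, b - a⟫ + ⟪u b, a - b⟫ = -⟪u a - u b, a - b⟫ := by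
      rw [inner_sub_left, ← neg_sub a b, inner_neg_right]; ring
    simp only [this] at h
    linarith
  · intro i hi hi'
    simp only [cycSucc, hi'.1, if_false]
    split_ifs <;> simp_all

end Cyclic

section Saddle

variable {E : Type*} [NormedAddCommGroup E] [InnerProductSpace ℝ E]

structure IsDecomp (Ω : Set E) (x : E) (D : E →₀ ℝ) : Prop extends IsProbWeight Ω D where
  barycentre : Finsupp.linearCombination ℝ id D = x

variable {Ω : Set E} {u : E → E} {x y : E} {D : E →₀ ℝ}

theorem isDecomp_single (hx : x ∈ Ω) : IsDecomp Ω x (Finsupp.single x 1) :=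
  { isProbWeight_single hx with barycentre := by simp }

theorem IsDecomp.convexCombination {x₁ x₂ : E} {D₁ D₂ : E →₀ ℝ} (h₁ : IsDecomp Ω x₁ D₁)
    (h₂ : IsDecomp Ω x₂ D₂) {θ₁ θ₂ : ℝ} (hθ₁ : 0 ≤ θ₁) (hθ₂ : 0 ≤ θ₂) (hθ : θ₁ + θ₂ = 1) :
    IsDecomp Ω (θ₁ • x₁ + θ₂ • x₂) (θ₁ • D₁ + θ₂ • D₂) where
  nonneg := add_nonneg (smul_nonneg hθ₁ h₁.nonneg) (smul_nonneg hθ₂ h₂.nonneg)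
  support_subset := by
    classical
    refine (Finset.coe_subset.2 Finsupp.support_add).trans ?_
    simp only [Finset.coe_union, Set.union_subset_iff]
    exact ⟨(Finset.coe_subset.2 Finsupp.support_smul).trans h₁.support_subset,
      (Finset.coe_subset.2 Finsupp.support_smul).trans h₂.support_subset⟩
  mass := by simp [h₁.mass, h₂.mass, hθ]
  barycentre := by simp [h₁.barycentre, h₂.barycentre]

theorem IsDecomp.linearCombination_inner_add (hD : IsDecomp Ω x D) (v : E) (c : ℝ) :
    Finsupp.linearCombination ℝ (fun z ↦ ⟪v, z⟫ + c) D = ⟪v, x⟫ + c := by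
  have hlin : Finsupp.linearCombination ℝ (fun z ↦ ⟪v, z⟫) D = ⟪v, x⟫ := by
    simpa [hD.barycentre] using
      (Finsupp.apply_linearCombination ℝ (innerₛₗ ℝ v) id D).symm
  calc Finsupp.linearCombination ℝ (fun z ↦ ⟪v, z⟫ + c) D
      = Finsupp.linearCombination ℝ (fun z ↦ ⟪v, z⟫) D
          + Finsupp.linearCombination ℝ (fun _ ↦ c) D := by
        simp only [Finsupp.linearCombination_apply, smul_add, Finsupp.sum_add]
    _ = ⟪v, x⟫ + c := by rw [hlin, hD.linearCombination_const]

def expectedPairing (u : E → E) (D : E →₀ ℝ) (y : E) : ℝ :=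
  Finsupp.linearCombination ℝ (fun z ↦ ⟪u z, y - z⟫) D

def pairingForm (u : E → E) : (E →₀ ℝ) →ₗ[ℝ] (E →₀ ℝ) →ₗ[ℝ] ℝ :=
  Finsupp.linearCombination ℝ fun z ↦ Finsupp.linearCombination ℝ fun w ↦ ⟪u z, w - z⟫

theorem pairingForm_single_single (z w : E) :
    pairingForm u (Finsupp.single z 1) (Finsupp.single w 1) = ⟪u z, w - z⟫ := by
  simp [pairingForm]

theorem pairingForm_apply_of_isDecomp (D : E →₀ ℝ) {D' : E →₀ ℝ} (hD' : IsDecomp Ω y D') :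
    pairingForm u D D' = expectedPairing u D y := by
  have hrow (z : E) : Finsupp.linearCombination ℝ (fun w ↦ ⟪u z, w - z⟫) D' = ⟪u z, y - z⟫ := by
    have h := hD'.linearCombination_inner_add (u z) (-⟪u z, z⟫)
    simp only [← sub_eq_add_neg, ← inner_sub_right] at h
    exact h
  rw [pairingForm, ← LinearMap.applyₗ_apply_apply (R := ℝ) D', Finsupp.apply_linearCombination]
  exact congrArg (Finsupp.linearCombination ℝ · D) (funext hrow)

theorem expectedPairing_single (z y : E) :
    expectedPairing u (Finsupp.single z 1) y = ⟪u z, y - z⟫ := by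
  simp [expectedPairing]

-- Through `pairingForm`, the cyclic sum is affine in each weight separately.
theorem CyclicallyMonotoneOn.sum_pairingForm_nonpos {N : ℕ} (hcyc : CyclicallyMonotoneOn N Ω u)
    (hN : 2 ≤ N) {D : ℕ → E →₀ ℝ} (hD : ∀ i, IsProbWeight Ω (D i))
    (hs : ∀ i ∉ Icc 1 N, ∃ z ∈ Ω, D i = Finsupp.single z 1) :
    ∑ i ∈ Icc 1 N, pairingForm u (D i) (D (cycSucc N i)) ≤ 0 :=
  nonpos_of_affine_of_nonpos_single
    (Ψ := fun D ↦ ∑ i ∈ Icc 1 N, pairingForm u (D i) (D (cycSucc N i)))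
    (exists_affine_sum_update _ fun i _ ↦ cycSucc_ne hN i)
    (fun z hz ↦ by
      simpa only [pairingForm_single_single] using hcyc.sum_inner_cycSucc_nonpos z fun i _ ↦ hz i)
    (Icc 1 N) hD hs

theorem expectedPairing_le_inner (hmono : IsMonotoneRel (Ω.graphOn u)) (hD : IsDecomp Ω x D)
    (hy : y ∈ Ω) : expectedPairing u D y ≤ ⟪u y, y - x⟫ := by
  calc expectedPairing u D y
      ≤ Finsupp.linearCombination ℝ (fun z ↦ ⟪-u y, z⟫ + ⟪u y, y⟫) D := by
        refine hD.linearCombination_mono fun z hz ↦ ?_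
        have := hmono.inner_sub_nonneg hy hz
        simp only [inner_sub_left, inner_sub_right, inner_neg_left, real_inner_comm] at this ⊢
        linarith
    _ = ⟪u y, y - x⟫ := by
        rw [hD.linearCombination_inner_add, inner_neg_left, inner_sub_right]
        ring

theorem expectedPairing_convexCombination (D : E →₀ ℝ) {y₁ y₂ : E} {θ₁ θ₂ : ℝ}
    (hθ : θ₁ + θ₂ = 1) :
    expectedPairing u D (θ₁ • y₁ + θ₂ • y₂) =
      θ₁ * expectedPairing u D y₁ + θ₂ * expectedPairing u D y₂ := by
  have hpt (z : E) : ⟪u z, θ₁ • y₁ + θ₂ • y₂ - z⟫ = θ₁ * ⟪u z, y₁ - z⟫ + θ₂ * ⟪u z, y₂ - z⟫ := by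
    rw [show θ₁ • y₁ + θ₂ • y₂ - z = θ₁ • (y₁ - z) + θ₂ • (y₂ - z) by
      rw [smul_sub, smul_sub, sub_add_sub_comm, ← add_smul, hθ, one_smul]]
    rw [inner_add_right, real_inner_smul_right, real_inner_smul_right]
  simp only [expectedPairing, Finsupp.linearCombination_apply, hpt, Finsupp.sum, Finset.mul_sum,
    smul_eq_mul, ← Finset.sum_add_distrib]
  exact Finset.sum_congr rfl fun _ _ ↦ by ring

def saddleFunction (Ω : Set E) (u : E → E) (x y : E) : ℝ :=
  sSup ((expectedPairing u · y) '' {D | IsDecomp Ω x D})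

theorem bddAbove_expectedPairing (hmono : IsMonotoneRel (Ω.graphOn u)) (hy : y ∈ Ω) :
    BddAbove ((expectedPairing u · y) '' {D | IsDecomp Ω x D}) :=
  ⟨⟪u y, y - x⟫, Set.forall_mem_image.2 fun _ hD ↦ expectedPairing_le_inner hmono hD hy⟩

theorem nonempty_expectedPairing (hx : x ∈ Ω) :
    ((expectedPairing u · y) '' {D | IsDecomp Ω x D}).Nonempty :=
  ⟨_, Set.mem_image_of_mem _ (isDecomp_single hx)⟩

theorem expectedPairing_le_saddleFunction (hmono : IsMonotoneRel (Ω.graphOn u)) {D : E →₀ ℝ}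
    (hD : IsDecomp Ω x D) (hy : y ∈ Ω) : expectedPairing u D y ≤ saddleFunction Ω u x y :=
  le_csSup (bddAbove_expectedPairing hmono hy) (Set.mem_image_of_mem _ hD)

theorem inner_le_saddleFunction (hmono : IsMonotoneRel (Ω.graphOn u)) (hx : x ∈ Ω)
    (hy : y ∈ Ω) : ⟪u x, y - x⟫ ≤ saddleFunction Ω u x y := by
  simpa [expectedPairing_single] using
    expectedPairing_le_saddleFunction hmono (isDecomp_single hx) hy

theorem saddleFunction_le_inner (hmono : IsMonotoneRel (Ω.graphOn u)) (hx : x ∈ Ω)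
    (hy : y ∈ Ω) : saddleFunction Ω u x y ≤ ⟪u y, y - x⟫ :=
  csSup_le (nonempty_expectedPairing hx) <| Set.forall_mem_image.2 fun _ hD ↦
    expectedPairing_le_inner hmono hD hy

theorem saddleFunction_self (hmono : IsMonotoneRel (Ω.graphOn u)) (hx : x ∈ Ω) :
    saddleFunction Ω u x x = 0 := by
  have h₁ := inner_le_saddleFunction hmono hx hx
  have h₂ := saddleFunction_le_inner hmono hx hx
  simp only [sub_self, inner_zero_right] at h₁ h₂
  exact le_antisymm h₂ h₁

theorem convexOn_saddleFunction (hΩ : Convex ℝ Ω) (hmono : IsMonotoneRel (Ω.graphOn u))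
    (hx : x ∈ Ω) : ConvexOn ℝ Ω (saddleFunction Ω u x) := by
  refine ⟨hΩ, fun y₁ hy₁ y₂ hy₂ θ₁ θ₂ hθ₁ hθ₂ hθ ↦ ?_⟩
  refine csSup_le (nonempty_expectedPairing hx) (Set.forall_mem_image.2 fun D hD ↦ ?_)
  rw [expectedPairing_convexCombination D hθ, smul_eq_mul, smul_eq_mul]
  gcongr
  · exact expectedPairing_le_saddleFunction hmono hD hy₁
  · exact expectedPairing_le_saddleFunction hmono hD hy₂

theorem concaveOn_saddleFunction (hΩ : Convex ℝ Ω) (hmono : IsMonotoneRel (Ω.graphOn u))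
    (hy : y ∈ Ω) : ConcaveOn ℝ Ω (saddleFunction Ω u · y) := by
  refine ⟨hΩ, fun x₁ hx₁ x₂ hx₂ θ₁ θ₂ hθ₁ hθ₂ hθ ↦ ?_⟩
  simp only [saddleFunction, smul_eq_mul]
  rw [← smul_eq_mul, ← Real.sSup_smul_of_nonneg hθ₁, ← smul_eq_mul,
    ← Real.sSup_smul_of_nonneg hθ₂,
    ← csSup_add (nonempty_expectedPairing hx₁).smul_set
      ((bddAbove_expectedPairing hmono hy).smul_of_nonneg hθ₁)
      (nonempty_expectedPairing hx₂).smul_set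
      ((bddAbove_expectedPairing hmono hy).smul_of_nonneg hθ₂)]
  refine csSup_le_csSup (bddAbove_expectedPairing hmono hy)
    ((nonempty_expectedPairing hx₁).smul_set.add (nonempty_expectedPairing hx₂).smul_set) ?_
  rintro _ ⟨_, ⟨_, ⟨D₁, hD₁, rfl⟩, rfl⟩, _, ⟨_, ⟨D₂, hD₂, rfl⟩, rfl⟩, rfl⟩
  refine ⟨θ₁ • D₁ + θ₂ • D₂, hD₁.convexCombination hD₂ hθ₁ hθ₂ hθ, ?_⟩
  simp [expectedPairing]

end Saddle

theorem sum_saddleFunction_nonpos {E : Type*} [NormedAddCommGroup E] [InnerProductSpace ℝ E]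
    {Ω : Set E} {u : E → E} {N : ℕ} (hN : 2 ≤ N) (hcyc : CyclicallyMonotoneOn N Ω u)
    {x : ℕ → E} (hx : ∀ i, 1 ≤ i → i ≤ N → x i ∈ Ω) (hx₁ : x (N + 1) = x 1) :
    ∑ i ∈ Icc 1 N, saddleFunction Ω u (x i) (x (i + 1)) ≤ 0 := by
  have hmono := hcyc.isMonotoneRel hN
  have hxΩ : ∀ i ∈ Icc 1 N, x i ∈ Ω := fun i hi ↦
    hx i (Finset.mem_Icc.1 hi).1 (Finset.mem_Icc.1 hi).2
  have hsuccΩ : ∀ i ∈ Icc 1 N, x (i + 1) ∈ Ω := fun i hi ↦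
    apply_cycSucc hx₁ i ▸ hxΩ _ (cycSucc_mem_Icc hi)
  have hN₁ : 1 ∈ Icc 1 N := Finset.mem_Icc.2 ⟨le_rfl, by omega⟩
  unfold saddleFunction
  rw [csSup_finsetSum _
    (fun i hi ↦ nonempty_expectedPairing (hxΩ i hi))
    (fun i hi ↦ bddAbove_expectedPairing hmono (hsuccΩ i hi))]
  refine csSup_le ?_ fun r hr ↦ ?_
  · exact ⟨_, Set.finsetSum_mem_finsetSum _ _ _ fun i hi ↦
      Set.mem_image_of_mem _ (isDecomp_single (hxΩ i hi))⟩
  obtain ⟨g, hg, rfl⟩ := (Set.mem_finsetSum _ _ _).1 hr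
  choose! D hD hDg using fun i (hi : i ∈ Icc 1 N) ↦ hg hi
  set D' : ℕ → E →₀ ℝ := fun i ↦ if i ∈ Icc 1 N then D i else Finsupp.single (x 1) 1
  have hD' : ∀ i ∈ Icc 1 N, D' i = D i := fun i hi ↦ if_pos hi
  calc ∑ i ∈ Icc 1 N, g i
      = ∑ i ∈ Icc 1 N, pairingForm u (D' i) (D' (cycSucc N i)) := by
        refine Finset.sum_congr rfl fun i hi ↦ ?_
        rw [hD' i hi, hD' _ (cycSucc_mem_Icc hi), ← hDg i hi,
          pairingForm_apply_of_isDecomp _ (apply_cycSucc hx₁ i ▸ hD _ (cycSucc_mem_Icc hi))]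
    _ ≤ 0 := by
        refine hcyc.sum_pairingForm_nonpos hN (fun i ↦ ?_) fun i hi ↦ ⟨x 1, hxΩ 1 hN₁, if_neg hi⟩
        by_cases hi : i ∈ Icc 1 N
        · exact hD' i hi ▸ (hD i hi).toIsProbWeight
        · simpa only [D', if_neg hi] using isProbWeight_single (hxΩ 1 hN₁)

theorem mapClusterPt_mem_closure_graphOn {X F : Type*} [TopologicalSpace X]
    [TopologicalSpace F] {Ω : Set X} {u : X → F} {x : X} {w : F}
    (h : MapClusterPt w (𝓝[Ω] x) u) :
    (x, w) ∈ closure (Ω.graphOn u) := by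
  rw [mem_closure_iff_nhds]
  intro t ht
  obtain ⟨U, hU, V, hV, hUV⟩ := mem_nhds_prod_iff.1 ht
  obtain ⟨y, hyV, hyΩ, hyU⟩ :=
    ((mapClusterPt_iff_frequently.1 h V hV).and_eventually (inter_mem_nhdsWithin Ω hU)).exists
  exact ⟨(y, u y), hUV ⟨hyU, hyV⟩, y, hyΩ, rfl⟩

theorem exists_ne_mem_closure_graphOn {X F : Type*} [TopologicalSpace X]
    [MetricSpace F] [ProperSpace F] {Ω : Set X} {u : X → F} {x : X}
    (hbdd : Bornology.IsBounded (u '' Ω)) (hx : ¬ ContinuousWithinAt u Ω x) :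
    ∃ w ≠ u x, (x, w) ∈ closure (Ω.graphOn u) := by
  by_contra! h
  refine hx (hbdd.isCompact_closure.tendsto_nhds_of_unique_mapClusterPt ?_
    fun w _ hw ↦ by_contra fun hne ↦ h w hne (mapClusterPt_mem_closure_graphOn hw))
  filter_upwards [self_mem_nhdsWithin] with y hy
  exact subset_closure (Set.mem_image_of_mem u hy)

section AEContinuity

variable {E : Type*} [NormedAddCommGroup E] [InnerProductSpace ℝ E]

theorem LipschitzOnWith.volume_image_null [FiniteDimensional ℝ E] [MeasurableSpace E]
    [BorelSpace E] {f : E → E} {K : NNReal} {s : Set E} (hf : LipschitzOnWith K f s)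
    (hs : volume s = 0) : volume (f '' s) = 0 := by
  rw [← InnerProductSpace.euclideanHausdorffMeasure_eq_volume,
    Measure.euclideanHausdorffMeasure_def, Measure.smul_apply, smul_eq_zero] at hs ⊢
  have hc := Measure.addHaarScalarFactor_volume_hausdorffMeasure_ne_zero (Module.finrank ℝ E)
  refine Or.inr (nonpos_iff_eq_zero.1 ?_)
  calc _ ≤ (K : ENNReal) ^ (Module.finrank ℝ E : ℝ) * μH[Module.finrank ℝ E] s :=
        hf.hausdorffMeasure_image_le (Nat.cast_nonneg _)
    _ = 0 := by rw [hs.resolve_left hc, mul_zero]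

theorem det_fderiv_eq_zero_of_eventually_const [FiniteDimensional ℝ E] {f : E → E} {z e : E}
    (he : e ≠ 0) (hf : DifferentiableAt ℝ f z)
    (hconst : ∀ᶠ t in 𝓝 (0 : ℝ), f (z + t • e) = f z) :
    (fderiv ℝ f z).det = 0 := by
  have hline : HasDerivAt (fun t : ℝ ↦ f (z + t • e)) (fderiv ℝ f z e) 0 := by
    have hlin : HasDerivAt (fun t : ℝ ↦ z + t • e) e 0 := by
      simpa using ((hasDerivAt_id (0 : ℝ)).smul_const e).const_add z
    exact hf.hasFDerivAt.comp_hasDerivAt_of_eq (0 : ℝ) hlin (by simp)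
  have hkill : fderiv ℝ f z e = 0 :=
    hline.unique ((hasDerivAt_const (0 : ℝ) (f z)).congr_of_eventuallyEq hconst)
  exact LinearMap.det_eq_zero_iff_ker_ne_bot.2 fun hker ↦
    he (LinearMap.ker_eq_bot'.1 hker e hkill)

theorem eventually_apply_add_smul_eq_of_mem {S : Set (E × E)} {P : E → E}
    (hPS : ∀ p ∈ fiberConvexHull S, P (p.1 + p.2) = p.1) {x w₁ w₂ : E} (h₁ : (x, w₁) ∈ S)
    (h₂ : (x, w₂) ∈ S) :
    ∀ᶠ t in 𝓝 (0 : ℝ), P (x + (w₁ + (2⁻¹ : ℝ) • (w₂ - w₁)) + t • (w₂ - w₁)) = x := by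
  have hfib : Convex ℝ {w | (x, w) ∈ fiberConvexHull S} := convex_convexHull ℝ {w | (x, w) ∈ S}
  filter_upwards [Ioo_mem_nhds (by norm_num : (-2⁻¹ : ℝ) < 0) (by norm_num : (0 : ℝ) < 2⁻¹)]
    with t ht
  have hmem := hfib.add_smul_sub_mem (subset_fiberConvexHull S h₁)
    (subset_fiberConvexHull S h₂) (t := 2⁻¹ + t) ⟨by linarith [ht.1], by linarith [ht.2]⟩
  rw [add_assoc, add_assoc, ← add_smul]
  exact hPS _ hmem

theorem IsMonotoneRel.ae_continuousWithinAt [FiniteDimensional ℝ E] [MeasurableSpace E]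
    [BorelSpace E] {Ω : Set E} {u : E → E} (hmono : IsMonotoneRel (Ω.graphOn u))
    (hbdd : Bornology.IsBounded (u '' Ω)) : ∀ᵐ x, x ∈ Ω → ContinuousWithinAt u Ω x := by
  obtain ⟨K, P, hP, hPS⟩ := hmono.closure.fiberConvexHull.exists_lipschitzWith
  have hdeg : volume (P '' {z | DifferentiableAt ℝ P z ∧ (fderiv ℝ P z).det = 0}) = 0 :=
    addHaar_image_eq_zero_of_det_fderivWithin_eq_zero volume
      (fun _ hz ↦ hz.1.hasFDerivAt.hasFDerivWithinAt) fun _ hz ↦ hz.2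
  have hnd : volume (P '' {z | ¬ DifferentiableAt ℝ P z}) = 0 :=
    hP.lipschitzOnWith.volume_image_null (ae_iff.1 hP.ae_differentiableAt)
  refine ae_iff.2 (measure_mono_null ?_ (measure_union_null hdeg hnd))
  intro x hx
  obtain ⟨hxΩ, hxc⟩ := Classical.not_imp.1 hx
  obtain ⟨w, hw, hxw⟩ := exists_ne_mem_closure_graphOn hbdd hxc
  -- `P` is constant along the segment `x + [u x, w]` of the fibre over `x`.
  set z := x + (u x + (2⁻¹ : ℝ) • (w - u x))
  have hline := eventually_apply_add_smul_eq_of_mem hPS (subset_closure ⟨x, hxΩ, rfl⟩) hxw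
  have hPz : P z = x := by simpa using hline.self_of_nhds
  by_cases hdiff : DifferentiableAt ℝ P z
  · refine Or.inl ⟨z, ⟨hdiff, det_fderiv_eq_zero_of_eventually_const (sub_ne_zero.2 hw) hdiff ?_⟩,
      hPz⟩
    filter_upwards [hline] with t ht
    rw [ht, hPz]
  · exact Or.inr ⟨z, hdiff, hPz⟩

theorem hasGradientAt_of_inner_le_of_le_inner [CompleteSpace E] {f : E → ℝ} {u : E → E} {x : E}
    (hfx : f x = 0) (hu : ContinuousAt u x)
    (hf : ∀ᶠ y in 𝓝 x, ⟪u x, y - x⟫ ≤ f y ∧ f y ≤ ⟪u y, y - x⟫) : HasGradientAt f (u x) x := by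
  rw [hasGradientAt_iff_isLittleO, hfx, Asymptotics.isLittleO_iff]
  intro c hc
  filter_upwards [hf, hu.eventually (Metric.closedBall_mem_nhds (u x) hc)] with y hy hyc
  rw [dist_eq_norm] at hyc
  have hgap : ⟪u y, y - x⟫ - ⟪u x, y - x⟫ ≤ c * ‖y - x‖ := by
    rw [← inner_sub_left]
    exact (real_inner_le_norm _ _).trans (mul_le_mul_of_nonneg_right hyc (norm_nonneg _))
  rw [sub_zero, Real.norm_eq_abs, abs_le]
  constructor <;> nlinarith [norm_nonneg (y - x)]

end AEContinuity

theorem statement6_general {d : ℕ} (N : ℕ) (hN : 2 ≤ N)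
    (Ω : Set (Ed d)) (hΩopen : IsOpen Ω) (hΩconv : Convex ℝ Ω)
    (u : Ed d → Ed d)
    (hubdd : ∃ C : ℝ, ∀ x ∈ Ω, ‖u x‖ ≤ C)
    (hmono : NCyclicallyMonotone N Ω u) :
    ∃ F : Ed d → Ed d → ℝ,
      -- (i) `F` is concave in the first variable and convex in the second
      (∀ y ∈ Ω, ConcaveOn ℝ Ω (fun x => F x y)) ∧
      (∀ x ∈ Ω, ConvexOn ℝ Ω (fun y => F x y)) ∧
      -- (ii) `F` is `N`-cyclically sub-antisymmetric: zero on the diagonal and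
      -- `∑_{i=1}^N F(xᵢ, xᵢ₊₁) ≤ 0` for every cyclic family in `Ω`
      (∀ x ∈ Ω, F x x = 0) ∧
      (∀ x : ℕ → Ed d, (∀ i, 1 ≤ i → i ≤ N → x i ∈ Ω) → x (N + 1) = x 1 →
        ∑ i ∈ Icc 1 N, F (x i) (x (i + 1)) ≤ 0) ∧
      -- (iii) `⟨u(x₁), x₂ - x₁⟩ ≤ F(x₁,x₂) ≤ ⟨u(x₂), x₂ - x₁⟩` on `Ω × Ω`,
      -- i.e. `(-u(x), u(x))` is in the subdifferential of `F` at `(x,x)`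
      (∀ x₁ ∈ Ω, ∀ x₂ ∈ Ω,
        ⟪u x₁, x₂ - x₁⟫ ≤ F x₁ x₂ ∧ F x₁ x₂ ≤ ⟪u x₂, x₂ - x₁⟫) ∧
      -- (iv) for a.e. `x ∈ Ω`, `y ↦ F(x,y)` is differentiable at `y = x` with
      -- gradient `u(x)`
      (∀ᵐ x ∂(volume.restrict Ω), HasGradientAt (fun y => F x y) (u x) x) := by
  have hcyc : CyclicallyMonotoneOn N Ω u := hmono
  have hmono₂ := hcyc.isMonotoneRel hN
  refine ⟨saddleFunction Ω u, fun y hy ↦ concaveOn_saddleFunction hΩconv hmono₂ hy,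
    fun x hx ↦ convexOn_saddleFunction hΩconv hmono₂ hx, fun x hx ↦ saddleFunction_self hmono₂ hx,
    fun x hx hx₁ ↦ sum_saddleFunction_nonpos hN hcyc hx hx₁,
    fun x₁ hx₁ x₂ hx₂ ↦ ⟨inner_le_saddleFunction hmono₂ hx₁ hx₂,
      saddleFunction_le_inner hmono₂ hx₁ hx₂⟩, ?_⟩
  obtain ⟨C, hC⟩ := hubdd
  have hbdd : Bornology.IsBounded (u '' Ω) :=
    isBounded_iff_forall_norm_le.2 ⟨C, Set.forall_mem_image.2 hC⟩
  rw [ae_restrict_iff' hΩopen.measurableSet]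
  filter_upwards [hmono₂.ae_continuousWithinAt hbdd] with x hcont hx
  have hΩx : Ω ∈ 𝓝 x := hΩopen.mem_nhds hx
  refine hasGradientAt_of_inner_le_of_le_inner (saddleFunction_self hmono₂ hx)
    ((hcont hx).continuousAt hΩx) ?_
  filter_upwards [hΩx] with y hy
  exact ⟨inner_le_saddleFunction hmono₂ hx hy, saddleFunction_le_inner hmono₂ hx hy⟩

theorem statement6 {d : ℕ} (N : ℕ) (hN : 2 ≤ N)
    (Ω : Set (Ed d)) (hΩopen : IsOpen Ω) (hΩconv : Convex ℝ Ω)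
    (hΩbdd : Bornology.IsBounded Ω) (hΩne : Ω.Nonempty)
    (u : Ed d → Ed d)
    (hubdd : ∃ C : ℝ, ∀ x ∈ Ω, ‖u x‖ ≤ C)
    (hmono : NCyclicallyMonotone N Ω u) :
    ∃ F : Ed d → Ed d → ℝ,
      -- (i) `F` is concave in the first variable and convex in the second
      (∀ y ∈ Ω, ConcaveOn ℝ Ω (fun x => F x y)) ∧
      (∀ x ∈ Ω, ConvexOn ℝ Ω (fun y => F x y)) ∧
      -- (ii) `F` is `N`-cyclically sub-antisymmetric: zero on the diagonal and
      -- `∑_{i=1}^N F(xᵢ, xᵢ₊₁) ≤ 0` for every cyclic family in `Ω`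
      (∀ x ∈ Ω, F x x = 0) ∧
      (∀ x : ℕ → Ed d, (∀ i, 1 ≤ i → i ≤ N → x i ∈ Ω) → x (N + 1) = x 1 →
        ∑ i ∈ Icc 1 N, F (x i) (x (i + 1)) ≤ 0) ∧
      -- (iii) `⟨u(x₁), x₂ - x₁⟩ ≤ F(x₁,x₂) ≤ ⟨u(x₂), x₂ - x₁⟩` on `Ω × Ω`,
      -- i.e. `(-u(x), u(x))` is in the subdifferential of `F` at `(x,x)`
      (∀ x₁ ∈ Ω, ∀ x₂ ∈ Ω,
        ⟪u x₁, x₂ - x₁⟫ ≤ F x₁ x₂ ∧ F x₁ x₂ ≤ ⟪u x₂, x₂ - x₁⟫) ∧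
      -- (iv) for a.e. `x ∈ Ω`, `y ↦ F(x,y)` is differentiable at `y = x` with
      -- gradient `u(x)`
      (∀ᵐ x ∂(volume.restrict Ω), HasGradientAt (fun y => F x y) (u x) x) :=
  statement6_general N hN Ω hΩopen hΩconv u hubdd hmono
end
end

section
/- Let N ≥ 2, let Ω be a convex bounded domain in ℝ^d whose boundary has Lebesgue measure zero, let μ be normalized Lebesgue measure on Ω, and let u_1,…,u_{N−1} : Ω → ℝ^d be bounded measurable vector fields. If ∫_{Ω^N} ∑_{ℓ=1}^{N−1} ⟨u_ℓ(x_1), x_1 − x_{ℓ+1}⟩ dπ ≥ 0 for every σ-invariant probability measure π on Ω^N with first marginal μ, then for every μ-measure-preserving map S : Ω → Ω with S^N = identity μ-a.e., one has ∫_Ω ∑_{ℓ=1}^{N−1} ⟨u_ℓ(x), x − S^ℓ x⟩ dμ(x) ≥ 0; consequently inf{ ∫_Ω ∑_{ℓ=1}^{N−1} ⟨u_ℓ(x), x − S^ℓ x⟩ dμ : S ∈ S_N(Ω,μ) } = 0, attained at S = identity. -/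
open MeasureTheory Finset
open scoped BigOperators RealInnerProductSpace
open scoped Fin.NatCast

noncomputable section

/-! A measure-preserving map `S` with `S^N = id` yields the `σ`-invariant transport plan
`π = (x ↦ (x, S x, …, S^{N-1} x))_# μ`: its first marginal is `μ`, and `σ` acts on the orbit
tuple of `x` as `S` acts on `x`, so `σ_# π = π`. The Monge cost of `S` is the
Monge–Kantorovich cost of `π`, hence nonnegative, and `S = id` has cost zero. -/

section OrbitTuple

variable {α : Type*} {N : ℕ} {S : α → α}

def orbitTuple (N : ℕ) (S : α → α) (x : α) : Fin N → α := fun i => S^[i] x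

@[simp]
lemma orbitTuple_zero [NeZero N] (x : α) : orbitTuple N S x 0 = x := by
  simp [orbitTuple]

lemma orbitTuple_natCast [NeZero N] {ℓ : ℕ} (hℓ : ℓ < N) (x : α) :
    orbitTuple N S x (ℓ : Fin N) = S^[ℓ] x := by
  simp [orbitTuple, Fin.val_cast_of_lt hℓ]

lemma cyc_orbitTuple {x : α} (hx : S^[N] x = x) :
    cyc (orbitTuple N S x) = orbitTuple N S (S x) := by
  funext i
  obtain ⟨n, rfl⟩ : ∃ n, N = n + 1 := Nat.exists_eq_succ_of_ne_zero i.pos.ne'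
  simp only [cyc, orbitTuple, Function.comp_apply, finRotate_apply,
    ← Function.iterate_succ_apply]
  rcases eq_or_ne i (Fin.last n) with rfl | hi
  · simpa using hx.symm
  · rw [Fin.val_add_one_of_lt (Fin.lt_last_iff_ne_last.mpr hi)]

variable [MeasurableSpace α] {μ : Measure α}

lemma measurable_orbitTuple (hS : Measurable S) : Measurable (orbitTuple N S) :=
  measurable_pi_lambda _ fun _ => hS.iterate _

lemma measurable_cyc : Measurable (cyc : (Fin N → α) → Fin N → α) :=
  measurable_pi_lambda _ fun _ => measurable_pi_apply _

lemma map_cyc_map_orbitTuple (hS : MeasurePreserving S μ μ) (hper : ∀ᵐ x ∂μ, S^[N] x = x) :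
    (μ.map (orbitTuple N S)).map cyc = μ.map (orbitTuple N S) := by
  have hT := measurable_orbitTuple (N := N) hS.measurable
  have hcomm : cyc ∘ orbitTuple N S =ᵐ[μ] orbitTuple N S ∘ S := by
    filter_upwards [hper] with x hx using cyc_orbitTuple hx
  rw [Measure.map_map measurable_cyc hT, Measure.map_congr hcomm,
    ← Measure.map_map hT hS.measurable, hS.map_eq]

lemma map_eval_zero_map_orbitTuple [NeZero N] (hS : Measurable S) :
    (μ.map (orbitTuple N S)).map (fun y => y 0) = μ := by
  rw [Measure.map_map (measurable_pi_apply 0) (measurable_orbitTuple hS)]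
  simp [Function.comp_def]

lemma map_orbitTuple_compl_null {Ω : Set α} (hΩ : MeasurableSet Ω) (hS : Measurable S)
    (hmaps : Set.MapsTo S Ω Ω) (hμΩ : μ Ωᶜ = 0) :
    μ.map (orbitTuple N S) {y | ∀ i, y i ∈ Ω}ᶜ = 0 := by
  have hpi : MeasurableSet {y : Fin N → α | ∀ i, y i ∈ Ω} := by
    simpa [Set.pi] using MeasurableSet.univ_pi fun _ : Fin N => hΩ
  rw [Measure.map_apply (measurable_orbitTuple hS) hpi.compl, Set.preimage_compl]
  exact measure_mono_null (Set.compl_subset_compl.mpr fun x hxΩ i => hmaps.iterate i hxΩ) hμΩ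

end OrbitTuple

section Cost

variable {E : Type*} [NormedAddCommGroup E] [InnerProductSpace ℝ E] {N : ℕ} [NeZero N]
  {u : ℕ → E → E}

def cyclicCost (N : ℕ) [NeZero N] (u : ℕ → E → E) (y : Fin N → E) : ℝ :=
  ∑ ℓ ∈ Icc 1 (N - 1), ⟪u ℓ (y 0), y 0 - y (ℓ : Fin N)⟫

lemma cyclicCost_orbitTuple (S : E → E) (x : E) :
    cyclicCost N u (orbitTuple N S x) = ∑ ℓ ∈ Icc 1 (N - 1), ⟪u ℓ x, x - S^[ℓ] x⟫ := by
  refine Finset.sum_congr rfl fun ℓ hℓ => ?_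
  have hℓN : ℓ < N := by
    have := (Finset.mem_Icc.mp hℓ).2
    have := NeZero.pos N
    omega
  rw [orbitTuple_zero, orbitTuple_natCast hℓN]

variable [MeasurableSpace E] [BorelSpace E] [SecondCountableTopology E]

lemma measurable_cyclicCost (hu : ∀ ℓ ∈ Icc 1 (N - 1), Measurable (u ℓ)) :
    Measurable (cyclicCost N u) :=
  Finset.measurable_sum _ fun ℓ hℓ => ((hu ℓ hℓ).comp (measurable_pi_apply 0)).inner
    ((measurable_pi_apply 0).sub (measurable_pi_apply _))

end Cost

theorem statement11_general {d : ℕ} (N : ℕ) [NeZero N]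
    (Ω : Set (Ed d)) (hΩopen : IsOpen Ω)
    (hΩbdd : Bornology.IsBounded Ω) (hΩne : Ω.Nonempty)
    -- `μ` is normalized Lebesgue measure on `Ω`
    (μ : Measure (Ed d)) (hμ : μ = (volume Ω)⁻¹ • volume.restrict Ω)
    (u : ℕ → Ed d → Ed d)
    (humeas : ∀ ℓ ∈ Icc 1 (N - 1), Measurable (u ℓ))
    -- the Monge–Kantorovich cost is nonnegative for every `σ`-invariant probability
    -- measure `π` on `Ω^N` with first marginal `μ`
    (hMK : ∀ π : Measure (Fin N → Ed d), IsProbabilityMeasure π →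
      π {y : Fin N → Ed d | ∀ i, y i ∈ Ω}ᶜ = 0 →
      Measure.map cyc π = π →
      Measure.map (fun y : Fin N → Ed d => y 0) π = μ →
      0 ≤ ∫ y, ∑ ℓ ∈ Icc 1 (N - 1), ⟪u ℓ (y 0), y 0 - y (ℓ : Fin N)⟫ ∂π) :
    -- for every measure-preserving `N`-involution `S` of `Ω`, the cost is nonnegative
    (∀ S : Ed d → Ed d, MeasurePreserving S μ μ → Set.MapsTo S Ω Ω →
      (∀ᵐ x ∂μ, S^[N] x = x) →
      0 ≤ ∫ x, ∑ ℓ ∈ Icc 1 (N - 1), ⟪u ℓ x, x - S^[ℓ] x⟫ ∂μ) ∧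
    -- consequently the infimum over `S_N(Ω,μ)` is zero, attained at the identity
    IsLeast {r : ℝ | ∃ S : Ed d → Ed d, MeasurePreserving S μ μ ∧ Set.MapsTo S Ω Ω ∧
      (∀ᵐ x ∂μ, S^[N] x = x) ∧
      r = ∫ x, ∑ ℓ ∈ Icc 1 (N - 1), ⟪u ℓ x, x - S^[ℓ] x⟫ ∂μ} 0 := by
  have hΩ : MeasurableSet Ω := hΩopen.measurableSet
  have hμ_cond : μ = ProbabilityTheory.cond volume Ω := hμ
  have : IsProbabilityMeasure μ := hμ_cond ▸ ProbabilityTheory.cond_isProbabilityMeasure_of_finite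
    (hΩopen.measure_pos volume hΩne).ne' hΩbdd.measure_lt_top.ne
  have hμΩ : μ Ωᶜ = 0 := by
    simp [hμ_cond, ProbabilityTheory.cond_apply hΩ]
  have monge_nonneg : ∀ S : Ed d → Ed d, MeasurePreserving S μ μ → Set.MapsTo S Ω Ω →
      (∀ᵐ x ∂μ, S^[N] x = x) →
      0 ≤ ∫ x, ∑ ℓ ∈ Icc 1 (N - 1), ⟪u ℓ x, x - S^[ℓ] x⟫ ∂μ := by
    intro S hS hmaps hper
    have hT := measurable_orbitTuple (N := N) hS.measurable
    have hπ := hMK (μ.map (orbitTuple N S)) (Measure.isProbabilityMeasure_map hT.aemeasurable)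
      (map_orbitTuple_compl_null hΩ hS.measurable hmaps hμΩ) (map_cyc_map_orbitTuple hS hper)
      (map_eval_zero_map_orbitTuple hS.measurable)
    change 0 ≤ ∫ y, cyclicCost N u y ∂(μ.map (orbitTuple N S)) at hπ
    simpa only [integral_map hT.aemeasurable (measurable_cyclicCost humeas).aestronglyMeasurable,
      cyclicCost_orbitTuple] using hπ
  refine ⟨monge_nonneg, ⟨id, MeasurePreserving.id μ, Set.mapsTo_id Ω, ?_, ?_⟩, ?_⟩
  · simp
  · simp
  · rintro r ⟨S, hS, hmaps, hper, rfl⟩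
    exact monge_nonneg S hS hmaps hper

theorem statement11 {d : ℕ} (N : ℕ) [NeZero N] (hN : 2 ≤ N)
    (Ω : Set (Ed d)) (hΩopen : IsOpen Ω) (hΩconv : Convex ℝ Ω)
    (hΩbdd : Bornology.IsBounded Ω) (hΩne : Ω.Nonempty)
    -- the boundary of `Ω` has Lebesgue measure zero
    (hΩfr : volume (frontier Ω) = 0)
    -- `μ` is normalized Lebesgue measure on `Ω`
    (μ : Measure (Ed d)) (hμ : μ = (volume Ω)⁻¹ • volume.restrict Ω)
    (u : ℕ → Ed d → Ed d)
    (humeas : ∀ ℓ ∈ Icc 1 (N - 1), Measurable (u ℓ))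
    (hubdd : ∀ ℓ ∈ Icc 1 (N - 1), ∃ C : ℝ, ∀ x ∈ Ω, ‖u ℓ x‖ ≤ C)
    -- the Monge–Kantorovich cost is nonnegative for every `σ`-invariant probability
    -- measure `π` on `Ω^N` with first marginal `μ`
    (hMK : ∀ π : Measure (Fin N → Ed d), IsProbabilityMeasure π →
      π {y : Fin N → Ed d | ∀ i, y i ∈ Ω}ᶜ = 0 →
      Measure.map cyc π = π →
      Measure.map (fun y : Fin N → Ed d => y 0) π = μ →
      0 ≤ ∫ y, ∑ ℓ ∈ Icc 1 (N - 1), ⟪u ℓ (y 0), y 0 - y (ℓ : Fin N)⟫ ∂π) :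
    -- for every measure-preserving `N`-involution `S` of `Ω`, the cost is nonnegative
    (∀ S : Ed d → Ed d, MeasurePreserving S μ μ → Set.MapsTo S Ω Ω →
      (∀ᵐ x ∂μ, S^[N] x = x) →
      0 ≤ ∫ x, ∑ ℓ ∈ Icc 1 (N - 1), ⟪u ℓ x, x - S^[ℓ] x⟫ ∂μ) ∧
    -- consequently the infimum over `S_N(Ω,μ)` is zero, attained at the identity
    IsLeast {r : ℝ | ∃ S : Ed d → Ed d, MeasurePreserving S μ μ ∧ Set.MapsTo S Ω Ω ∧
      (∀ᵐ x ∂μ, S^[N] x = x) ∧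
      r = ∫ x, ∑ ℓ ∈ Icc 1 (N - 1), ⟪u ℓ x, x - S^[ℓ] x⟫ ∂μ} 0 :=
  statement11_general N Ω hΩopen hΩbdd hΩne μ hμ u humeas hMK
end
end
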